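/- arXiv:0903.2240 — 9 statements merged into one kernel-verified Lean document; each statement's English description precedes it below -/
import Mathlib

section
/- If R is a commutative ring, I a proper ideal, and P a prime ideal of R with I ⊆ P, then P₀ = {(p, p+i) : p ∈ P, i ∈ I} is a prime ideal of R ⋈ I, and it is the unique prime ideal of R ⋈ I lying over P. -/
/-- The amalgamated duplication of a ring `R` along an ideal `I`, as a subring of `R × R`. -/
def dup (R : Type*) [CommRing R] (I : Ideal R) : Subring (R × R) where
  carrier := {x | x.2 - x.1 ∈ I}
  zero_mem' := by simp
  one_mem' := by simp
  add_mem' := by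
    intro a b ha hb
    show a.2 + b.2 - (a.1 + b.1) ∈ I
    have h : a.2 + b.2 - (a.1 + b.1) = (a.2 - a.1) + (b.2 - b.1) := by ring
    rw [h]; exact I.add_mem ha hb
  neg_mem' := by
    intro a ha
    show -a.2 - -a.1 ∈ I
    have h : -a.2 - -a.1 = -(a.2 - a.1) := by ring
    rw [h]; exact I.neg_mem ha
  mul_mem' := by
    intro a b ha hb
    show a.2 * b.2 - a.1 * b.1 ∈ I
    have h : a.2 * b.2 - a.1 * b.1 = a.2 * (b.2 - b.1) + b.1 * (a.2 - a.1) := by ring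
    rw [h]; exact I.add_mem (I.mul_mem_left _ hb) (I.mul_mem_left _ ha)

/-- The diagonal embedding `R → R ⋈ I`. -/
def diag (R : Type*) [CommRing R] (I : Ideal R) : R →+* dup R I where
  toFun r := ⟨(r, r), show r - r ∈ I by simp⟩
  map_one' := rfl
  map_mul' _ _ := rfl
  map_zero' := rfl
  map_add' _ _ := rfl

/-! The first projection `R ⋈ I → R` is split by the diagonal, so every `x` differs from
`diag x₁` by an element `(0, i)` of its kernel. Such an element satisfies
`(0, i) * (i, 0) = 0` with `(0, i) + (i, 0) = diag i`; hence a prime `Q` with `diag i ∈ Q`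
for all `i ∈ I` contains the kernel, and then `Q` is the preimage of `Q ∩ R` under the
projection. -/

theorem Ideal.comap_comap_eq_of_ker_le {A B : Type*} [CommRing A] [CommRing B] (f : A →+* B)
    (s : B →+* A) (hfs : f.comp s = RingHom.id B) {Q : Ideal A} (hQ : RingHom.ker f ≤ Q) :
    (Q.comap s).comap f = Q := by
  ext x
  have hker : x - s (f x) ∈ Q := hQ <| by
    rw [RingHom.mem_ker, map_sub, ← RingHom.comp_apply f s, hfs, RingHom.id_apply, sub_self]
  constructor
  · intro hx
    simpa using Q.add_mem hker hx
  · intro hx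
    simpa using Q.sub_mem hx hker

def dupFst (R : Type*) [CommRing R] (I : Ideal R) : dup R I →+* R :=
  (RingHom.fst R R).comp (dup R I).subtype

section

variable {R : Type*} [CommRing R] {I : Ideal R}

@[simp]
theorem dupFst_apply (x : dup R I) : dupFst R I x = (x : R × R).1 := rfl

theorem dupFst_comp_diag : (dupFst R I).comp (diag R I) = RingHom.id R := rfl

theorem mem_comap_dupFst_iff {J : Ideal R} (x : dup R I) :
    x ∈ J.comap (dupFst R I) ↔ ∃ p ∈ J, ∃ i ∈ I, (x : R × R) = (p, p + i) := by
  constructor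
  · intro hx
    exact ⟨(x : R × R).1, hx, (x : R × R).2 - (x : R × R).1, x.2, by ext <;> simp⟩
  · rintro ⟨p, hp, i, -, hx⟩
    simpa [hx] using hp

theorem ker_dupFst_le {Q : Ideal (dup R I)} [Q.IsPrime] (hIQ : I ≤ Q.comap (diag R I)) :
    RingHom.ker (dupFst R I) ≤ Q := by
  intro x hx
  have hx₁ : (x : R × R).1 = 0 := hx
  have hdiag : diag R I (x : R × R).2 ∈ Q := hIQ <| by
    have hmem : (x : R × R).2 - (x : R × R).1 ∈ I := x.2
    rwa [hx₁, sub_zero] at hmem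
  have hzero : x * (diag R I (x : R × R).2 - x) = 0 := by
    apply Subtype.ext
    change (x : R × R) * (((x : R × R).2, (x : R × R).2) - x) = 0
    ext <;> simp [hx₁]
  rcases Ideal.IsPrime.mem_or_mem ‹_› (hzero ▸ Q.zero_mem) with hx' | hsub
  · exact hx'
  · simpa using Q.sub_mem hdiag hsub

end

theorem unique_prime_over_of_le_general (R : Type*) [CommRing R] (I P : Ideal R)
    [P.IsPrime] (hIP : I ≤ P) :
    ∃ P₀ : Ideal (dup R I),
      (∀ x : dup R I, x ∈ P₀ ↔ ∃ p ∈ P, ∃ i ∈ I, (x : R × R) = (p, p + i)) ∧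
      P₀.IsPrime ∧
      ∀ Q : Ideal (dup R I), Q.IsPrime → Q.comap (diag R I) = P → Q = P₀ := by
  refine ⟨P.comap (dupFst R I), mem_comap_dupFst_iff, Ideal.IsPrime.comap _, ?_⟩
  intro Q _ hQP
  have hker : RingHom.ker (dupFst R I) ≤ Q := ker_dupFst_le (hQP ▸ hIP)
  rw [← hQP, Ideal.comap_comap_eq_of_ker_le _ _ dupFst_comp_diag hker]

/-- if `I ⊆ P` with `P` prime, then `P₀ = {(p, p+i) : p ∈ P, i ∈ I}` is a
prime ideal of `R ⋈ I` and it is the unique prime of `R ⋈ I` lying over `P`. -/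
theorem unique_prime_over_of_le (R : Type*) [CommRing R] (I P : Ideal R) (hI : I ≠ ⊤)
    [P.IsPrime] (hIP : I ≤ P) :
    ∃ P₀ : Ideal (dup R I),
      (∀ x : dup R I, x ∈ P₀ ↔ ∃ p ∈ P, ∃ i ∈ I, (x : R × R) = (p, p + i)) ∧
      P₀.IsPrime ∧
      ∀ Q : Ideal (dup R I), Q.IsPrime → Q.comap (diag R I) = P → Q = P₀ :=
  unique_prime_over_of_le_general R I P hIP
end

section
/- If R is a commutative ring, I a proper ideal, and P a prime ideal of R with I ⊄ P, then P₁ = {(p, p+i) : p ∈ P, i ∈ I} and P₂ = {(p+i, p) : p ∈ P, i ∈ I} are distinct prime ideals of R ⋈ I, their intersection is P₀ = {(p, p+i) : p ∈ P, i ∈ P ∩ I}, and P₁, P₂ are the only primes of R ⋈ I lying over P. -/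
theorem Ideal.comap_comap_eq_of_leftInverse_of_ker_le {A B : Type*} [Ring A] [Ring B]
    (f : A →+* B) (s : B →+* A) (hfs : Function.LeftInverse f s) {Q : Ideal A}
    (hQ : RingHom.ker f ≤ Q) : (Q.comap s).comap f = Q := by
  ext x
  have hx : x - s (f x) ∈ Q := hQ (by rw [RingHom.mem_ker, map_sub, hfs, sub_self])
  simp only [Ideal.mem_comap]
  exact ⟨fun h ↦ by simpa using Q.add_mem hx h, fun h ↦ by simpa using Q.sub_mem h hx⟩

namespace dup

def fst (R : Type*) [CommRing R] (I : Ideal R) : dup R I →+* R :=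
  (RingHom.fst R R).comp (dup R I).subtype

def snd (R : Type*) [CommRing R] (I : Ideal R) : dup R I →+* R :=
  (RingHom.snd R R).comp (dup R I).subtype

variable {R : Type*} [CommRing R] {I : Ideal R}

@[simp]
lemma fst_apply (x : dup R I) : fst R I x = (x : R × R).1 := rfl

@[simp]
lemma snd_apply (x : dup R I) : snd R I x = (x : R × R).2 := rfl

lemma snd_sub_fst_mem (x : dup R I) : (x : R × R).2 - (x : R × R).1 ∈ I := x.2

lemma fst_sub_snd_mem (x : dup R I) : (x : R × R).1 - (x : R × R).2 ∈ I := by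
  simpa using I.neg_mem (snd_sub_fst_mem x)

lemma leftInverse_fst_diag : Function.LeftInverse (fst R I) (diag R I) := fun _ ↦ rfl

lemma leftInverse_snd_diag : Function.LeftInverse (snd R I) (diag R I) := fun _ ↦ rfl

lemma ker_fst_mul_ker_snd : RingHom.ker (fst R I) * RingHom.ker (snd R I) = ⊥ := by
  refine le_bot_iff.mp (Ideal.mul_le.mpr fun x hx y hy ↦ ?_)
  rw [RingHom.mem_ker] at hx hy
  rw [Ideal.mem_bot]
  ext
  · simp [← fst_apply, hx]
  · simp [← snd_apply, hy]

lemma ker_fst_le_or_ker_snd_le {Q : Ideal (dup R I)} (hQ : Q.IsPrime) :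
    RingHom.ker (fst R I) ≤ Q ∨ RingHom.ker (snd R I) ≤ Q :=
  hQ.mul_le.mp (ker_fst_mul_ker_snd.trans_le bot_le)

lemma eq_comap_fst_or_eq_comap_snd {Q : Ideal (dup R I)} (hQ : Q.IsPrime) :
    Q = (Q.comap (diag R I)).comap (fst R I) ∨ Q = (Q.comap (diag R I)).comap (snd R I) :=
  (ker_fst_le_or_ker_snd_le hQ).imp
    (fun h ↦ (Ideal.comap_comap_eq_of_leftInverse_of_ker_le (fst R I) (diag R I)
      leftInverse_fst_diag h).symm)
    (fun h ↦ (Ideal.comap_comap_eq_of_leftInverse_of_ker_le (snd R I) (diag R I)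
      leftInverse_snd_diag h).symm)

lemma mem_comap_fst_iff {P : Ideal R} {x : dup R I} :
    x ∈ P.comap (fst R I) ↔ ∃ p ∈ P, ∃ i ∈ I, (x : R × R) = (p, p + i) := by
  refine ⟨fun hx ↦ ⟨_, hx, _, snd_sub_fst_mem x, by simp⟩, ?_⟩
  rintro ⟨p, hp, i, -, hx⟩
  simpa [hx] using hp

lemma mem_comap_snd_iff {P : Ideal R} {x : dup R I} :
    x ∈ P.comap (snd R I) ↔ ∃ p ∈ P, ∃ i ∈ I, (x : R × R) = (p + i, p) := by
  refine ⟨fun hx ↦ ⟨_, hx, _, fst_sub_snd_mem x, by simp⟩, ?_⟩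
  rintro ⟨p, hp, i, -, hx⟩
  simpa [hx] using hp

lemma mem_comap_fst_inf_comap_snd_iff {P : Ideal R} {x : dup R I} :
    x ∈ P.comap (fst R I) ⊓ P.comap (snd R I) ↔
      ∃ p ∈ P, ∃ i ∈ P ⊓ I, (x : R × R) = (p, p + i) := by
  refine ⟨fun ⟨h₁, h₂⟩ ↦ ⟨_, h₁, _, ⟨P.sub_mem h₂ h₁, snd_sub_fst_mem x⟩, by simp⟩, ?_⟩
  rintro ⟨p, hp, i, ⟨hiP, -⟩, hx⟩
  exact ⟨by simpa [hx] using hp, by simpa [hx] using P.add_mem hp hiP⟩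

lemma comap_fst_ne_comap_snd {P : Ideal R} (hIP : ¬ I ≤ P) :
    P.comap (fst R I) ≠ P.comap (snd R I) := by
  obtain ⟨i, hiI, hiP⟩ := Set.not_subset.mp hIP
  let x : dup R I := ⟨(0, i), show i - 0 ∈ I by simpa using hiI⟩
  have hx₁ : x ∈ P.comap (fst R I) := by simp [x]
  have hx₂ : x ∉ P.comap (snd R I) := by simpa [x] using hiP
  exact fun h ↦ hx₂ (h ▸ hx₁)

end dup

open dup in
theorem two_primes_over_of_not_le_general (R : Type*) [CommRing R] (I P : Ideal R)
    [P.IsPrime] (hIP : ¬ I ≤ P) :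
    ∃ P₁ P₂ : Ideal (dup R I),
      (∀ x : dup R I, x ∈ P₁ ↔ ∃ p ∈ P, ∃ i ∈ I, (x : R × R) = (p, p + i)) ∧
      (∀ x : dup R I, x ∈ P₂ ↔ ∃ p ∈ P, ∃ i ∈ I, (x : R × R) = (p + i, p)) ∧
      P₁ ≠ P₂ ∧ P₁.IsPrime ∧ P₂.IsPrime ∧
      (∀ x : dup R I, x ∈ P₁ ⊓ P₂ ↔ ∃ p ∈ P, ∃ i ∈ P ⊓ I, (x : R × R) = (p, p + i)) ∧
      ∀ Q : Ideal (dup R I), Q.IsPrime → Q.comap (diag R I) = P → Q = P₁ ∨ Q = P₂ := by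
  refine ⟨P.comap (fst R I), P.comap (snd R I), fun _ ↦ mem_comap_fst_iff,
    fun _ ↦ mem_comap_snd_iff, comap_fst_ne_comap_snd hIP, Ideal.comap_isPrime _ _,
    Ideal.comap_isPrime _ _, fun _ ↦ mem_comap_fst_inf_comap_snd_iff, ?_⟩
  rintro Q hQ rfl
  exact eq_comap_fst_or_eq_comap_snd hQ

/-- if `P` is prime and `I ⊄ P`, then `P₁ = {(p, p+i)}` and `P₂ = {(p+i, p)}`
are distinct primes of `R ⋈ I`, `P₁ ∩ P₂ = P₀ = {(p, p+i) : p ∈ P, i ∈ P ∩ I}`, and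
`P₁, P₂` are the only primes of `R ⋈ I` lying over `P`. -/
theorem two_primes_over_of_not_le (R : Type*) [CommRing R] (I P : Ideal R) (hI : I ≠ ⊤)
    [P.IsPrime] (hIP : ¬ I ≤ P) :
    ∃ P₁ P₂ : Ideal (dup R I),
      (∀ x : dup R I, x ∈ P₁ ↔ ∃ p ∈ P, ∃ i ∈ I, (x : R × R) = (p, p + i)) ∧
      (∀ x : dup R I, x ∈ P₂ ↔ ∃ p ∈ P, ∃ i ∈ I, (x : R × R) = (p + i, p)) ∧
      P₁ ≠ P₂ ∧ P₁.IsPrime ∧ P₂.IsPrime ∧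
      (∀ x : dup R I, x ∈ P₁ ⊓ P₂ ↔ ∃ p ∈ P, ∃ i ∈ P ⊓ I, (x : R × R) = (p, p + i)) ∧
      ∀ Q : Ideal (dup R I), Q.IsPrime → Q.comap (diag R I) = P → Q = P₁ ∨ Q = P₂ :=
  two_primes_over_of_not_le_general R I P hIP
end

section
/- A commutative ring R is von Neumann regular if and only if the amalgamated duplication R ⋈ I is von Neumann regular, for any proper ideal I of R. -/
theorem exists_eq_mul_mul_of_leftInverse {R S : Type*} [Semiring R] [Semiring S] (f : R →+* S)
    (g : S →+* R) (hgf : Function.LeftInverse g f) (h : ∀ a : S, ∃ x, a = a * x * a) (a : R) :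
    ∃ x, a = a * x * a := by
  obtain ⟨x, hx⟩ := h (f a)
  exact ⟨g x, by simpa [hgf a] using congrArg g hx⟩

section CommRing

variable {R : Type*} [CommRing R]

theorem sub_mul_mul_sub_mem_of_sub_mem {I : Ideal R} {r s : R} (h : s - r ∈ I) (x : R) :
    s - s * x * s - (r - r * x * r) ∈ I := by
  rw [← Ideal.Quotient.eq] at h ⊢
  simp only [map_sub, map_mul, h]

theorem eq_mul_add_mul_mul_of_eq_mul_mul {s u : R} (hu : s = s * u * s) (x : R) :
    s = s * (x + u * (s - s * x * s) * u) * s := by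
  linear_combination (1 - s * x) * (1 + s * u) * hu

theorem exists_sub_mem_and_eq_mul_mul {I : Ideal R} {s u x : R} (hu : s = s * u * s)
    (hx : s - s * x * s ∈ I) : ∃ y, y - x ∈ I ∧ s = s * y * s :=
  ⟨x + u * (s - s * x * s) * u, by simpa using I.mul_mem_right u (I.mul_mem_left u hx),
    eq_mul_add_mul_mul_of_eq_mul_mul hu x⟩

theorem dup_exists_eq_mul_mul {I : Ideal R} (h : ∀ a : R, ∃ x, a = a * x * a) (a : dup R I) :
    ∃ x, a = a * x * a := by
  obtain ⟨⟨r, s⟩, hrs⟩ := a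
  obtain ⟨x, hx⟩ := h r
  obtain ⟨u, hu⟩ := h s
  have hk : s - s * x * s ∈ I := by
    simpa [← hx] using sub_mul_mul_sub_mem_of_sub_mem hrs x
  obtain ⟨y, hyx, hy⟩ := exists_sub_mem_and_eq_mul_mul hu hk
  exact ⟨⟨(x, y), hyx⟩, Subtype.ext (Prod.ext hx hy)⟩

end CommRing

theorem vonNeumannRegular_iff_dup_general (R : Type*) [CommRing R] (I : Ideal R) :
    (∀ a : R, ∃ x : R, a = a * x * a) ↔
    (∀ a : dup R I, ∃ x : dup R I, a = a * x * a) :=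
  ⟨dup_exists_eq_mul_mul,
    exists_eq_mul_mul_of_leftInverse (diag R I) ((RingHom.fst R R).comp (dup R I).subtype)
      fun _ => rfl⟩

/-- `R` is von Neumann regular iff `R ⋈ I` is von Neumann regular. -/
theorem vonNeumannRegular_iff_dup (R : Type*) [CommRing R] (I : Ideal R) (hI : I ≠ ⊤) :
    (∀ a : R, ∃ x : R, a = a * x * a) ↔
    (∀ a : dup R I, ∃ x : dup R I, a = a * x * a) :=
  vonNeumannRegular_iff_dup_general R I
end

section
/- If I² = 0, then the amalgamated duplication R ⋈ I is isomorphic as a ring to the trivial extension (idealization) R ⋉ I. -/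
/-!
Writing a point of `R ⋈ I` as `(r, r + i)` identifies it additively with `(r, i) ∈ R ⋉ I` for
every ideal. The products agree up to the cross term: `(r, r + i) (s, s + j)` has second
coordinate `rs + (rj + si) + ij`, and `ij ∈ I² = 0`.
-/

def dupAddEquivTrivSqZeroExt (R : Type*) [CommRing R] (I : Ideal R) :
    dup R I ≃+ TrivSqZeroExt R I where
  toFun x := (x.1.1, ⟨x.1.2 - x.1.1, x.2⟩)
  invFun y := ⟨(y.1, y.1 + y.2), show y.1 + (y.2 : R) - y.1 ∈ I by simp⟩
  left_inv := by
    rintro ⟨⟨a, b⟩, h⟩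
    ext <;> simp
  right_inv := by
    rintro ⟨r, i⟩
    ext <;> simp
  map_add' := by
    rintro ⟨⟨a, b⟩, ha⟩ ⟨⟨c, d⟩, hc⟩
    ext
    · rfl
    · show b + d - (a + c) = (b - a) + (d - c)
      ring

theorem Ideal.mul_eq_zero_of_mul_eq_bot {R : Type*} [CommRing R] {I : Ideal R} (hsq : I * I = ⊥)
    {x y : R} (hx : x ∈ I) (hy : y ∈ I) : x * y = 0 := by
  simpa [hsq] using Ideal.mul_mem_mul hx hy

def dupRingEquivTrivSqZeroExt (R : Type*) [CommRing R] (I : Ideal R) (hsq : I * I = ⊥) :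
    dup R I ≃+* TrivSqZeroExt R I where
  __ := dupAddEquivTrivSqZeroExt R I
  map_mul' := by
    rintro ⟨⟨a, b⟩, ha⟩ ⟨⟨c, d⟩, hc⟩
    have cross : (b - a) * (d - c) = 0 := Ideal.mul_eq_zero_of_mul_eq_bot hsq ha hc
    ext
    · rfl
    · show b * d - a * c = a * (d - c) + (b - a) * c
      linear_combination cross

/-- if `I² = 0`, then `R ⋈ I` is ring-isomorphic to the trivial extension
(idealization) `R ⋉ I`. -/
theorem dup_iso_trivSqZeroExt (R : Type*) [CommRing R] (I : Ideal R) (hsq : I * I = ⊥) :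
    Nonempty (dup R I ≃+* TrivSqZeroExt R I) :=
  ⟨dupRingEquivTrivSqZeroExt R I hsq⟩
end

section
/- If I is a principal ideal of a commutative ring R, then the ideals O₁ = {(0, i) : i ∈ I} and O₂ = {(i, 0) : i ∈ I} are principal ideals of R ⋈ I, generated by (0, a) and (a, 0) respectively, where I = Ra. -/
namespace dup

variable {R : Type*} [CommRing R] {I : Ideal R}

def ofSnd (i : I) : dup R I := ⟨(0, i), show (i : R) - 0 ∈ I by simp⟩

def ofFst (i : I) : dup R I := ⟨(i, 0), show 0 - (i : R) ∈ I by simp⟩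

/- The multiples of `(0, a)` are the pairs `(0, c₂ * a)` with `c ∈ R ⋈ I`, and `c₂` ranges over
all of `R` because the diagonal lies in `R ⋈ I`. -/
theorem mem_span_ofSnd_iff {a : R} (haI : a ∈ I) (x : dup R I) :
    x ∈ Ideal.span {ofSnd ⟨a, haI⟩} ↔ (x : R × R).1 = 0 ∧ (x : R × R).2 ∈ Ideal.span {a} := by
  simp only [Ideal.mem_span_singleton']
  constructor
  · rintro ⟨c, rfl⟩
    exact ⟨mul_zero _, _, rfl⟩
  · rintro ⟨hx₁, r, hr⟩
    exact ⟨diag R I r, Subtype.ext (Prod.ext (by simpa [ofSnd] using hx₁.symm) hr)⟩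

theorem mem_span_ofFst_iff {a : R} (haI : a ∈ I) (x : dup R I) :
    x ∈ Ideal.span {ofFst ⟨a, haI⟩} ↔ (x : R × R).2 = 0 ∧ (x : R × R).1 ∈ Ideal.span {a} := by
  simp only [Ideal.mem_span_singleton']
  constructor
  · rintro ⟨c, rfl⟩
    exact ⟨mul_zero _, _, rfl⟩
  · rintro ⟨hx₂, r, hr⟩
    exact ⟨diag R I r, Subtype.ext (Prod.ext hr (by simpa [ofFst] using hx₂.symm))⟩

end dup

theorem O1_O2_principal_general (R : Type*) [CommRing R] (I : Ideal R) (a : R)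
    (ha : I = Ideal.span {a}) :
    ∃ o₁ o₂ : dup R I, (o₁ : R × R) = (0, a) ∧ (o₂ : R × R) = (a, 0) ∧
      (∀ x : dup R I, ((x : R × R).1 = 0 ∧ (x : R × R).2 ∈ I) ↔ x ∈ Ideal.span {o₁}) ∧
      (∀ x : dup R I, ((x : R × R).2 = 0 ∧ (x : R × R).1 ∈ I) ↔ x ∈ Ideal.span {o₂}) := by
  have haI : a ∈ I := ha ▸ Ideal.mem_span_singleton_self a
  refine ⟨dup.ofSnd ⟨a, haI⟩, dup.ofFst ⟨a, haI⟩, rfl, rfl, fun x => ?_, fun x => ?_⟩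
  · rw [dup.mem_span_ofSnd_iff, ← ha]
  · rw [dup.mem_span_ofFst_iff, ← ha]

/-- if `I = Ra` is principal, then `O₁ = {(0,i) : i ∈ I}` and
`O₂ = {(i,0) : i ∈ I}` are principal ideals of `R ⋈ I`, generated by `(0,a)` and `(a,0)`. -/
theorem O1_O2_principal (R : Type*) [CommRing R] (I : Ideal R) (a : R)
    (ha : I = Ideal.span {a}) (hI : I ≠ ⊤) :
    ∃ o₁ o₂ : dup R I, (o₁ : R × R) = (0, a) ∧ (o₂ : R × R) = (a, 0) ∧
      (∀ x : dup R I, ((x : R × R).1 = 0 ∧ (x : R × R).2 ∈ I) ↔ x ∈ Ideal.span {o₁}) ∧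
      (∀ x : dup R I, ((x : R × R).2 = 0 ∧ (x : R × R).1 ∈ I) ↔ x ∈ Ideal.span {o₂}) :=
  O1_O2_principal_general R I a ha
end

section
/- Let R be an integral domain and I = Ra a nonzero principal proper ideal. Then in R ⋈ I, the ideals O₁ = {(0, i) : i ∈ I} and O₂ = {(i, 0) : i ∈ I} are not projective as R ⋈ I-modules. -/
/-- The first projection `R ⋈ I → R`. -/
def pr1 (R : Type*) [CommRing R] (I : Ideal R) : dup R I →+* R :=
  (RingHom.fst R R).comp (dup R I).subtype

/-- The second projection `R ⋈ I → R`. -/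
def pr2 (R : Type*) [CommRing R] (I : Ideal R) : dup R I →+* R :=
  (RingHom.snd R R).comp (dup R I).subtype

theorem Module.Projective.exists_smul_eq_self_of_span_singleton_eq_top {S M : Type*} [Semiring S]
    [AddCommMonoid M] [Module S M] [Module.Projective S M] {m : M}
    (hm : Submodule.span S {m} = ⊤) : ∃ e : S, e • m = m ∧ ∀ j : S, j • m = 0 → j * e = 0 := by
  have hsurj : Function.Surjective (LinearMap.toSpanSingleton S M m) := fun x => by
    simpa [eq_comm] using Submodule.mem_span_singleton.mp (hm ▸ Submodule.mem_top : x ∈ _)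
  obtain ⟨h, hh⟩ := Module.projective_lifting_property _ LinearMap.id hsurj
  refine ⟨h m, by simpa using LinearMap.congr_fun hh m, fun j hj => ?_⟩
  rw [← smul_eq_mul, ← h.map_smul, hj, map_zero]

theorem Ideal.exists_mul_eq_self_of_projective {S : Type*} [CommRing S] (m : S)
    [Module.Projective S (Ideal.span {m})] :
    ∃ e : S, e * m = m ∧ ∀ j : S, j * m = 0 → j * e = 0 := by
  have hspan : Submodule.span S {(⟨m, Ideal.mem_span_singleton_self m⟩ : Ideal.span {m})} = ⊤ := by
    refine eq_top_iff.mpr fun ⟨x, hx⟩ _ => ?_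
    obtain ⟨s, rfl⟩ := Ideal.mem_span_singleton'.mp hx
    exact Submodule.mem_span_singleton.mpr ⟨s, rfl⟩
  obtain ⟨e, he, hann⟩ := Module.Projective.exists_smul_eq_self_of_span_singleton_eq_top hspan
  exact ⟨e, congrArg Subtype.val he, fun j hj => hann j (Subtype.ext hj)⟩

section Duplication

variable {R : Type*} [CommRing R]

theorem mem_dup {I : Ideal R} {x : R × R} : x ∈ dup R I ↔ x.2 - x.1 ∈ I := Iff.rfl

theorem zero_mk_mem_dup {I : Ideal R} {a : R} (ha : a ∈ I) : ((0 : R), a) ∈ dup R I := by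
  simpa [mem_dup] using ha

theorem mk_zero_mem_dup {I : Ideal R} {a : R} (ha : a ∈ I) : (a, (0 : R)) ∈ dup R I := by
  simpa [mem_dup] using ha

theorem ker_pr1_eq_span_singleton (a : R) :
    RingHom.ker (pr1 R (Ideal.span {a})) =
      Ideal.span {⟨(0, a), zero_mk_mem_dup (Ideal.mem_span_singleton_self a)⟩} := by
  ext ⟨⟨x₁, x₂⟩, hx⟩
  have hpr : pr1 R _ ⟨(x₁, x₂), hx⟩ = x₁ := rfl
  rw [RingHom.mem_ker, hpr, Ideal.mem_span_singleton']
  constructor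
  · rintro rfl
    obtain ⟨r, hr⟩ := Ideal.mem_span_singleton'.mp (by simpa [mem_dup] using hx)
    exact ⟨diag R _ r, Subtype.ext (Prod.ext (mul_zero r) hr)⟩
  · rintro ⟨s, hs⟩
    simpa using congrArg (fun y => y.1.1) hs.symm

theorem ker_pr2_eq_span_singleton (a : R) :
    RingHom.ker (pr2 R (Ideal.span {a})) =
      Ideal.span {⟨(a, 0), mk_zero_mem_dup (Ideal.mem_span_singleton_self a)⟩} := by
  ext ⟨⟨x₁, x₂⟩, hx⟩
  have hpr : pr2 R _ ⟨(x₁, x₂), hx⟩ = x₂ := rfl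
  rw [RingHom.mem_ker, hpr, Ideal.mem_span_singleton']
  constructor
  · rintro rfl
    obtain ⟨r, hr⟩ := Ideal.mem_span_singleton'.mp (by simpa [mem_dup] using hx)
    exact ⟨diag R _ r, Subtype.ext (Prod.ext hr (mul_zero r))⟩
  · rintro ⟨s, hs⟩
    simpa using congrArg (fun y => y.1.2) hs.symm

variable [IsDomain R] {a : R}

theorem not_projective_ker_pr1 (ha : a ≠ 0) (hI : Ideal.span {a} ≠ ⊤) :
    ¬ Module.Projective (dup R (Ideal.span {a})) (RingHom.ker (pr1 R (Ideal.span {a}))) := by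
  have haI := Ideal.mem_span_singleton_self a
  rw [ker_pr1_eq_span_singleton]
  intro _
  obtain ⟨⟨⟨e₁, e₂⟩, he⟩, hfix, hann⟩ :=
    Ideal.exists_mul_eq_self_of_projective (⟨(0, a), zero_mk_mem_dup haI⟩ : dup R _)
  have hj := hann ⟨(a, 0), mk_zero_mem_dup haI⟩
    (Subtype.ext (Prod.ext (mul_zero a) (zero_mul a)))
  have h₁ : e₁ = 0 := (mul_eq_zero.mp (congrArg (fun y => y.1.1) hj)).resolve_left ha
  have h₂ : e₂ = 1 := mul_right_cancel₀ ha ((congrArg (fun y => y.1.2) hfix).trans (one_mul a).symm)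
  exact (Ideal.ne_top_iff_one _).mp hI (by simpa [mem_dup, h₁, h₂] using he)

theorem not_projective_ker_pr2 (ha : a ≠ 0) (hI : Ideal.span {a} ≠ ⊤) :
    ¬ Module.Projective (dup R (Ideal.span {a})) (RingHom.ker (pr2 R (Ideal.span {a}))) := by
  have haI := Ideal.mem_span_singleton_self a
  rw [ker_pr2_eq_span_singleton]
  intro _
  obtain ⟨⟨⟨e₁, e₂⟩, he⟩, hfix, hann⟩ :=
    Ideal.exists_mul_eq_self_of_projective (⟨(a, 0), mk_zero_mem_dup haI⟩ : dup R _)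
  have hj := hann ⟨(0, a), zero_mk_mem_dup haI⟩
    (Subtype.ext (Prod.ext (zero_mul a) (mul_zero a)))
  have h₁ : e₁ = 1 := mul_right_cancel₀ ha ((congrArg (fun y => y.1.1) hfix).trans (one_mul a).symm)
  have h₂ : e₂ = 0 := (mul_eq_zero.mp (congrArg (fun y => y.1.2) hj)).resolve_left ha
  exact (Ideal.ne_top_iff_one _).mp hI (by simpa [mem_dup, h₁, h₂] using he)

end Duplication

/-- if `R` is a domain and `I = Ra ≠ 0` is a principal proper ideal, then
`O₁ = ker π₁ = {(0,i) : i ∈ I}` and `O₂ = ker π₂ = {(i,0) : i ∈ I}` are not projective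
`R ⋈ I`-modules. -/
theorem O1_O2_not_projective (R : Type*) [CommRing R] [IsDomain R] (I : Ideal R) (a : R)
    (ha : I = Ideal.span {a}) (hne : I ≠ ⊥) (hI : I ≠ ⊤) :
    ¬ Module.Projective (dup R I) (RingHom.ker (pr1 R I)) ∧
    ¬ Module.Projective (dup R I) (RingHom.ker (pr2 R I)) := by
  subst ha
  have ha₀ : a ≠ 0 := by
    rintro rfl
    exact hne (Ideal.span_singleton_eq_bot.mpr rfl)
  exact ⟨not_projective_ker_pr1 ha₀ hI, not_projective_ker_pr2 ha₀ hI⟩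
end

section
/- Let R be an integral domain and I = Ra a nonzero principal proper ideal. There are short exact sequences of R ⋈ I-modules 0 → O₂ → R ⋈ I → O₁ → 0 and 0 → O₁ → R ⋈ I → O₂ → 0, where the middle maps are multiplication by (0, a) and (a, 0) respectively; in particular O₁ and O₂ are m-presented for every positive integer m. -/
set_option synthInstance.maxHeartbeats 1000000
set_option maxHeartbeats 1000000

/-- `NPresented R m M` means `M` is an `m`-presented `R`-module: there is an exact
sequence `F_m → ⋯ → F_0 → M → 0` with each `F_j` finitely generated free. -/
def NPresented (R : Type u) [Ring R] : ℕ → ∀ (M : Type u) [AddCommGroup M] [Module R M], Prop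
  | 0 => fun M _ _ => Module.Finite R M
  | n + 1 => fun M _ _ =>
      ∃ (k : ℕ) (f : (Fin k → R) →ₗ[R] M),
        Function.Surjective f ∧ NPresented R n (LinearMap.ker f)

namespace NPresented

variable {S : Type u} [Ring S] {M N : Type u} [AddCommGroup M] [Module S M]
  [AddCommGroup N] [Module S N]

theorem of_linearEquiv (e : M ≃ₗ[S] N) : ∀ {n : ℕ}, NPresented S n M → NPresented S n N
  | 0, h => by
    have : Module.Finite S M := h
    exact Module.Finite.equiv e
  | _ + 1, ⟨k, f, hf, hker⟩ => by
    refine ⟨k, e.toLinearMap ∘ₗ f, e.surjective.comp hf, ?_⟩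
    rwa [LinearMap.ker_comp, LinearEquiv.ker, Submodule.comap_bot]

theorem succ_of_surjective (g : S →ₗ[S] M) (hg : Function.Surjective g) {n : ℕ}
    (h : NPresented S n (LinearMap.ker g)) : NPresented S (n + 1) M := by
  let e : (Fin 1 → S) ≃ₗ[S] S := LinearEquiv.funUnique (Fin 1) S S
  refine ⟨1, g ∘ₗ e.toLinearMap, hg.comp e.surjective, ?_⟩
  rw [LinearMap.ker_comp, Submodule.comap_equiv_eq_map_symm]
  exact of_linearEquiv (e.symm.submoduleMap _) h

theorem of_surjective_of_ker_equiv (u : S →ₗ[S] M) (hu : Function.Surjective u)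
    (v : S →ₗ[S] N) (hv : Function.Surjective v) (eu : LinearMap.ker u ≃ₗ[S] N)
    (ev : LinearMap.ker v ≃ₗ[S] M) : ∀ n : ℕ, NPresented S n M ∧ NPresented S n N
  | 0 => ⟨Module.Finite.of_surjective u hu, Module.Finite.of_surjective v hv⟩
  | n + 1 =>
    have ih := of_surjective_of_ker_equiv u hu v hv eu ev n
    ⟨succ_of_surjective u hu (of_linearEquiv eu.symm ih.2),
      succ_of_surjective v hv (of_linearEquiv ev.symm ih.1)⟩

end NPresented

theorem Submodule.toSpanSingleton_surjective {S M : Type*} [Semiring S] [AddCommMonoid M]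
    [Module S M] {P : Submodule S M} (z : P) (hP : P = Submodule.span S {(z : M)}) :
    Function.Surjective (LinearMap.toSpanSingleton S P z) := by
  rintro ⟨y, hy⟩
  obtain ⟨r, rfl⟩ := Submodule.mem_span_singleton.mp (hP ▸ hy)
  exact ⟨r, rfl⟩

namespace dup

variable {R : Type u} [CommRing R] {I : Ideal R}

theorem mem_ker_pr1 {x : dup R I} : x ∈ RingHom.ker (pr1 R I) ↔ (x : R × R).1 = 0 := Iff.rfl

theorem mem_ker_pr2 {x : dup R I} : x ∈ RingHom.ker (pr2 R I) ↔ (x : R × R).2 = 0 := Iff.rfl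

def inl (a : I) : dup R I := ⟨(a, 0), show 0 - (a : R) ∈ I by simp⟩

def inr (a : I) : dup R I := ⟨(0, a), show (a : R) - 0 ∈ I by simp⟩

theorem inl_mem_ker_pr2 (a : I) : inl a ∈ RingHom.ker (pr2 R I) := rfl

theorem inr_mem_ker_pr1 (a : I) : inr a ∈ RingHom.ker (pr1 R I) := rfl

theorem ker_pr2_eq_span_inl {a : I} (ha : I = Ideal.span {(a : R)}) :
    RingHom.ker (pr2 R I) = Ideal.span {inl a} := by
  refine le_antisymm (fun x hx => ?_)
    ((Ideal.span_singleton_le_iff_mem _).mpr (inl_mem_ker_pr2 a))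
  obtain ⟨⟨x₁, x₂⟩, hx₁₂⟩ := x
  have hx₂ : x₂ = 0 := hx
  have hx₁ : x₁ ∈ I := by simpa [hx₂] using I.neg_mem (show x₂ - x₁ ∈ I from hx₁₂)
  obtain ⟨r, rfl⟩ := Ideal.mem_span_singleton'.mp (ha ▸ hx₁)
  refine Ideal.mem_span_singleton'.mpr ⟨diag R I r, Subtype.ext ?_⟩
  simp [diag, inl, hx₂]

theorem ker_pr1_eq_span_inr {a : I} (ha : I = Ideal.span {(a : R)}) :
    RingHom.ker (pr1 R I) = Ideal.span {inr a} := by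
  refine le_antisymm (fun x hx => ?_)
    ((Ideal.span_singleton_le_iff_mem _).mpr (inr_mem_ker_pr1 a))
  obtain ⟨⟨x₁, x₂⟩, hx₁₂⟩ := x
  have hx₁ : x₁ = 0 := hx
  have hx₂ : x₂ ∈ I := by simpa [hx₁] using show x₂ - x₁ ∈ I from hx₁₂
  obtain ⟨r, rfl⟩ := Ideal.mem_span_singleton'.mp (ha ▸ hx₂)
  refine Ideal.mem_span_singleton'.mpr ⟨diag R I r, Subtype.ext ?_⟩
  simp [diag, inr, hx₁]

def mulInl (a : I) : dup R I →ₗ[dup R I] RingHom.ker (pr2 R I) :=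
  LinearMap.toSpanSingleton _ _ ⟨inl a, inl_mem_ker_pr2 a⟩

def mulInr (a : I) : dup R I →ₗ[dup R I] RingHom.ker (pr1 R I) :=
  LinearMap.toSpanSingleton _ _ ⟨inr a, inr_mem_ker_pr1 a⟩

theorem coe_mulInl (a : I) (x : dup R I) : (mulInl a x : dup R I) = x * inl a := rfl

theorem coe_mulInr (a : I) (x : dup R I) : (mulInr a x : dup R I) = x * inr a := rfl

theorem mulInl_surjective {a : I} (ha : I = Ideal.span {(a : R)}) :
    Function.Surjective (mulInl a) :=
  Submodule.toSpanSingleton_surjective _ (ker_pr2_eq_span_inl ha)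

theorem mulInr_surjective {a : I} (ha : I = Ideal.span {(a : R)}) :
    Function.Surjective (mulInr a) :=
  Submodule.toSpanSingleton_surjective _ (ker_pr1_eq_span_inr ha)

variable [NoZeroDivisors R]

theorem ker_mulInl {a : I} (ha : (a : R) ≠ 0) :
    LinearMap.ker (mulInl a) = RingHom.ker (pr1 R I) := by
  ext ⟨⟨x₁, x₂⟩, hx⟩
  rw [LinearMap.mem_ker, ← Subtype.coe_inj, coe_mulInl, mem_ker_pr1]
  simp [inl, Subtype.ext_iff, ha]

theorem ker_mulInr {a : I} (ha : (a : R) ≠ 0) :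
    LinearMap.ker (mulInr a) = RingHom.ker (pr2 R I) := by
  ext ⟨⟨x₁, x₂⟩, hx⟩
  rw [LinearMap.mem_ker, ← Subtype.coe_inj, coe_mulInr, mem_ker_pr2]
  simp [inr, Subtype.ext_iff, ha]

end dup

theorem O1_O2_exact_sequences_general (R : Type u) [CommRing R] [IsDomain R] (I : Ideal R) (a : R)
    (ha : I = Ideal.span {a}) (hne : I ≠ ⊥) :
    ∃ o₁ o₂ : dup R I, (o₁ : R × R) = (0, a) ∧ (o₂ : R × R) = (a, 0) ∧
      (∃ u : dup R I →ₗ[dup R I] (RingHom.ker (pr1 R I)),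
        (∀ x : dup R I, (u x : dup R I) = x * o₁) ∧ Function.Surjective u ∧
          LinearMap.ker u = (RingHom.ker (pr2 R I) : Ideal (dup R I))) ∧
      (∃ v : dup R I →ₗ[dup R I] (RingHom.ker (pr2 R I)),
        (∀ x : dup R I, (v x : dup R I) = x * o₂) ∧ Function.Surjective v ∧
          LinearMap.ker v = (RingHom.ker (pr1 R I) : Ideal (dup R I))) ∧
      (∀ m : ℕ, NPresented (dup R I) m (RingHom.ker (pr1 R I)) ∧
        NPresented (dup R I) m (RingHom.ker (pr2 R I))) := by
  have ha0 : a ≠ 0 := by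
    rintro rfl
    exact hne (by rw [ha, Ideal.span_singleton_eq_bot])
  let a' : I := ⟨a, ha ▸ Ideal.mem_span_singleton_self a⟩
  have hu := dup.mulInr_surjective (a := a') ha
  have hv := dup.mulInl_surjective (a := a') ha
  have hku := dup.ker_mulInr (a := a') ha0
  have hkv := dup.ker_mulInl (a := a') ha0
  exact ⟨dup.inr a', dup.inl a', rfl, rfl, ⟨_, dup.coe_mulInr a', hu, hku⟩,
    ⟨_, dup.coe_mulInl a', hv, hkv⟩,
    NPresented.of_surjective_of_ker_equiv _ hu _ hv (.ofEq _ _ hku) (.ofEq _ _ hkv)⟩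

/-- with `O₁ = ker π₁` and `O₂ = ker π₂`, there are short exact sequences
`0 → O₂ → R ⋈ I → O₁ → 0` and `0 → O₁ → R ⋈ I → O₂ → 0` whose middle maps are
multiplication by `(0,a)` and `(a,0)`; in particular `O₁` and `O₂` are `m`-presented for
every `m`. -/
theorem O1_O2_exact_sequences (R : Type u) [CommRing R] [IsDomain R] (I : Ideal R) (a : R)
    (ha : I = Ideal.span {a}) (hne : I ≠ ⊥) (hI : I ≠ ⊤) :
    ∃ o₁ o₂ : dup R I, (o₁ : R × R) = (0, a) ∧ (o₂ : R × R) = (a, 0) ∧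
      (∃ u : dup R I →ₗ[dup R I] (RingHom.ker (pr1 R I)),
        (∀ x : dup R I, (u x : dup R I) = x * o₁) ∧ Function.Surjective u ∧
          LinearMap.ker u = (RingHom.ker (pr2 R I) : Ideal (dup R I))) ∧
      (∃ v : dup R I →ₗ[dup R I] (RingHom.ker (pr2 R I)),
        (∀ x : dup R I, (v x : dup R I) = x * o₂) ∧ Function.Surjective v ∧
          LinearMap.ker v = (RingHom.ker (pr1 R I) : Ideal (dup R I))) ∧
      (∀ m : ℕ, NPresented (dup R I) m (RingHom.ker (pr1 R I)) ∧
        NPresented (dup R I) m (RingHom.ker (pr2 R I))) :=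
  O1_O2_exact_sequences_general R I a ha hne
end

section
/- If R ⋈ I is a coherent ring, then R is a coherent ring. -/
/-- A commutative ring is *coherent* if every finitely generated ideal is finitely
presented. -/
def IsCoherentRing (R : Type*) [CommRing R] : Prop :=
  ∀ J : Ideal R, J.FG → Module.FinitePresentation R J

/-!
The first projection `R ⋈ I → R` is a retraction of the diagonal `R → R ⋈ I`, and coherence
descends along ring retractions `π ∘ σ = id`, `σ : R → S`: the module of relations of a finite
family `a` in `R` is the image under `π` of the module of relations of `σ ∘ a` in `S`, since `σ`
carries relations of `a` to relations of `σ ∘ a` and `π` carries them back.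
-/

open LinearMap Submodule

theorem Ideal.finitePresentation_span_range_iff {R ι : Type*} [CommRing R] [Fintype ι]
    (a : ι → R) :
    Module.FinitePresentation R (Ideal.span (Set.range a)) ↔
      (ker (Fintype.linearCombination R a)).FG := by
  let f := (LinearEquiv.ofEq _ _ (Fintype.range_linearCombination R a)).toLinearMap ∘ₗ
    (Fintype.linearCombination R a).rangeRestrict
  have hf : Function.Surjective f := by
    simpa [f] using (Fintype.linearCombination R a).surjective_rangeRestrict
  rw [← Module.FinitePresentation.fg_ker_iff f hf, LinearEquiv.ker_comp, ker_rangeRestrict]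

theorem isCoherentRing_iff_fg_ker_linearCombination {R : Type*} [CommRing R] :
    IsCoherentRing R ↔
      ∀ (n : ℕ) (a : Fin n → R), (ker (Fintype.linearCombination R a)).FG := by
  refine ⟨fun h n a => ?_, fun h J hJ => ?_⟩
  · exact (Ideal.finitePresentation_span_range_iff a).mp (h _ (fg_span (Set.finite_range a)))
  · obtain ⟨n, a, rfl⟩ := fg_iff_exists_fin_generating_family.mp hJ
    exact (Ideal.finitePresentation_span_range_iff a).mpr (h n a)

def RingHom.compLeftₛₗ {R S : Type*} [Semiring R] [Semiring S] (π : S →+* R) (ι : Type*) :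
    (ι → S) →ₛₗ[π] ι → R where
  toFun g := π ∘ g
  map_add' _ _ := funext fun _ => map_add π _ _
  map_smul' _ _ := funext fun _ => map_mul π _ _

theorem fg_ker_linearCombination_of_leftInverse {R S ι : Type*} [CommRing R] [CommRing S]
    [Fintype ι] {π : S →+* R} {σ : R →+* S} (hπσ : Function.LeftInverse π σ) (a : ι → R)
    (h : (ker (Fintype.linearCombination S (σ ∘ a))).FG) :
    (ker (Fintype.linearCombination R a)).FG := by
  have : RingHomSurjective π := ⟨hπσ.surjective⟩
  suffices ker (Fintype.linearCombination R a) =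
      (ker (Fintype.linearCombination S (σ ∘ a))).map (π.compLeftₛₗ ι) from this ▸ h.map _
  apply le_antisymm
  · intro x hx
    refine ⟨σ ∘ x, ?_, funext fun i => hπσ (x i)⟩
    simpa [Fintype.linearCombination_apply, ← map_mul, ← map_sum] using congrArg σ hx
  · rw [map_le_iff_le_comap]
    intro g hg
    simpa [Fintype.linearCombination_apply, RingHom.compLeftₛₗ, map_sum, hπσ _]
      using congrArg π hg

theorem IsCoherentRing.of_leftInverse {R S : Type*} [CommRing R] [CommRing S] {π : S →+* R}
    {σ : R →+* S} (hπσ : Function.LeftInverse π σ) (h : IsCoherentRing S) :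
    IsCoherentRing R := by
  rw [isCoherentRing_iff_fg_ker_linearCombination] at h ⊢
  exact fun n a => fg_ker_linearCombination_of_leftInverse hπσ a (h n (σ ∘ a))

theorem coherent_of_dup_coherent_general (R : Type*) [CommRing R] (I : Ideal R)
    (h : IsCoherentRing (dup R I)) : IsCoherentRing R :=
  h.of_leftInverse (π := (RingHom.fst R R).comp (dup R I).subtype) (σ := diag R I) fun _ => rfl

/-- if `R ⋈ I` is coherent then `R` is coherent. -/
theorem coherent_of_dup_coherent (R : Type*) [CommRing R] (I : Ideal R) (hI : I ≠ ⊤)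
    (h : IsCoherentRing (dup R I)) : IsCoherentRing R :=
  coherent_of_dup_coherent_general R I h
end

section
/- If R is a coherent ring and I is a finitely generated proper ideal of R, then R ⋈ I is a coherent ring. -/
open Submodule

def Module.IsPseudoCoherent (R M : Type*) [Ring R] [AddCommGroup M] [Module R M] : Prop :=
  ∀ N : Submodule R M, N.FG → Module.FinitePresentation R N

namespace Module.IsPseudoCoherent

variable {R M N : Type*} [Ring R] [AddCommGroup M] [Module R M] [AddCommGroup N] [Module R N]

theorem finitePresentation_of_injective (hM : IsPseudoCoherent R M) [Module.Finite R N]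
    (f : N →ₗ[R] M) (hf : Function.Injective f) : Module.FinitePresentation R N :=
  have := hM _ (fg_range f)
  .of_equiv (LinearEquiv.ofInjective f hf).symm

theorem of_injective (hM : IsPseudoCoherent R M) (f : N →ₗ[R] M) (hf : Function.Injective f) :
    IsPseudoCoherent R N := fun P hP =>
  have : Module.Finite R P := .of_fg hP
  hM.finitePresentation_of_injective (f ∘ₗ P.subtype) (hf.comp P.injective_subtype)

theorem prod (hM : IsPseudoCoherent R M) (hN : IsPseudoCoherent R N) :
    IsPseudoCoherent R (M × N) := by
  intro P hP
  have : Module.Finite R P := .of_fg hP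
  let l := LinearMap.snd R M N ∘ₗ P.subtype
  have : Module.FinitePresentation R (LinearMap.range l) := hN _ (fg_range l)
  have : Module.Finite R (LinearMap.ker l.rangeRestrict) :=
    .of_fg (Module.FinitePresentation.fg_ker _ l.surjective_rangeRestrict)
  -- `0 → P ∩ (M × 0) → P → snd P → 0`, with `P ∩ (M × 0)` embedded in `M` by `fst`
  have : Module.FinitePresentation R (LinearMap.ker l.rangeRestrict) := by
    let g : LinearMap.ker l.rangeRestrict →ₗ[R] M :=
      LinearMap.fst R M N ∘ₗ P.subtype ∘ₗ (LinearMap.ker l.rangeRestrict).subtype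
    refine hM.finitePresentation_of_injective (N := LinearMap.ker l.rangeRestrict) g ?_
    rintro ⟨⟨x, hxP⟩, hx⟩ ⟨⟨y, hyP⟩, hy⟩ hxy
    simp only [LinearMap.ker_rangeRestrict, LinearMap.mem_ker] at hx hy
    ext : 2
    exact Prod.ext hxy (hx.trans hy.symm)
  exact Module.finitePresentation_of_ker l.rangeRestrict l.surjective_rangeRestrict

end Module.IsPseudoCoherent

theorem Module.FinitePresentation.of_restrictScalars (R : Type*) {S M : Type*} [CommRing R]
    [Ring S] [Algebra R S] [Module.Finite R S] [AddCommGroup M] [Module R M] [Module S M]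
    [IsScalarTower R S M] [Module.FinitePresentation R M] : Module.FinitePresentation S M := by
  have : Module.Finite S M := .of_restrictScalars_finite R S M
  obtain ⟨n, f, hf⟩ := Module.Finite.exists_fin' S M
  refine Module.finitePresentation_of_free_of_surjective f hf (.of_restrictScalars R ?_)
  rw [← LinearMap.ker_restrictScalars]
  exact Module.FinitePresentation.fg_ker (f.restrictScalars R) hf

namespace dup

variable (R : Type*) [CommRing R] (I : Ideal R)

instance : Algebra R (dup R I) := (diag R I).toAlgebra

theorem coe_smul (r : R) (x : dup R I) : ((r • x : dup R I) : R × R) = r • (x : R × R) := rfl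

def equivProd : dup R I ≃ₗ[R] R × I where
  toFun x := ((x : R × R).1, ⟨(x : R × R).2 - (x : R × R).1, x.2⟩)
  invFun y := ⟨(y.1, y.1 + y.2), show y.1 + y.2 - y.1 ∈ I by simp⟩
  map_add' x y := by ext <;> simp; ring
  map_smul' r x := by ext <;> simp [coe_smul]; ring
  left_inv x := by ext <;> simp
  right_inv y := by ext <;> simp

theorem finite (hI : I.FG) : Module.Finite R (dup R I) :=
  have : Module.Finite R I := .of_fg hI
  .equiv (equivProd R I).symm

theorem isPseudoCoherent (hR : IsCoherentRing R) : Module.IsPseudoCoherent R (dup R I) :=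
  have hR' : Module.IsPseudoCoherent R R := hR
  (hR'.prod (hR'.of_injective I.subtype I.injective_subtype)).of_injective
    (equivProd R I).toLinearMap (equivProd R I).injective

end dup

theorem dup_coherent_of_coherent_general (R : Type*) [CommRing R] (I : Ideal R)
    (hR : IsCoherentRing R) (hFG : I.FG) : IsCoherentRing (dup R I) := by
  intro J hJ
  have : Module.Finite R (dup R I) := dup.finite R I hFG
  have : Module.Finite (dup R I) J := .of_fg hJ
  have : Module.Finite R J := .trans (dup R I) J
  have : Module.FinitePresentation R J :=
    (dup.isPseudoCoherent R I hR).finitePresentation_of_injective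
      (J.subtype.restrictScalars R) J.injective_subtype
  exact .of_restrictScalars R

/-- if `R` is coherent and `I` is a finitely generated proper ideal of `R`,
then `R ⋈ I` is coherent. -/
theorem dup_coherent_of_coherent (R : Type*) [CommRing R] (I : Ideal R) (hI : I ≠ ⊤)
    (hR : IsCoherentRing R) (hFG : I.FG) : IsCoherentRing (dup R I) :=
  dup_coherent_of_coherent_general R I hR hFG
end
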